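/- arXiv:2202.01189 — 2 statements merged into one kernel-verified Lean document; each statement's English description precedes it below -/
import Mathlib

section
/- Let k be a field, n ≥ 1, and let A = (a_1,…,a_p) and B = (b_1,…,b_q) be finite lists of vectors in ℕ^n. If C = k_1A ⋈ k_2B for some positive integers k_1, k_2 and rk(A|B) = n (the glued semigroup is nondegenerate), then rk A + rk B = n + 1. In particular, if moreover rk A = n, then rk B = 1. -/
open MvPolynomial

/-- The toric ideal `I_A` of a finite list `A` of vectors in `ℕ^n`:
the kernel of the `k`-algebra map `k[x_j : j ∈ σ] → k[t_1,…,t_n]`, `x_j ↦ t^{A j}`. -/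
noncomputable def toricIdeal (k : Type*) [CommRing k] {σ : Type*} {n : ℕ}
    (A : σ → Fin n → ℕ) : Ideal (MvPolynomial σ k) :=
  RingHom.ker (MvPolynomial.aeval (R := k) (fun j => ∏ i, MvPolynomial.X i ^ A j i) :
    MvPolynomial σ k →ₐ[k] MvPolynomial (Fin n) k)

/-- The semigroup ring `k[A] = k[x]/I_A`. -/
abbrev semigroupRing (k : Type*) [CommRing k] {σ : Type*} {n : ℕ}
    (A : σ → Fin n → ℕ) : Type _ :=
  MvPolynomial σ k ⧸ toricIdeal k A

/-- The list `C = k₁A ⊔ k₂B`. -/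
def glueList {n : ℕ} {σ τ : Type*} (k1 k2 : ℕ)
    (A : σ → Fin n → ℕ) (B : τ → Fin n → ℕ) : σ ⊕ τ → Fin n → ℕ :=
  Sum.elim (fun j i => k1 * A j i) (fun j i => k2 * B j i)

/-- The extension `I_A·R` of `I_A ⊆ k[x]` to `R = k[x,y]`. -/
noncomputable def extIdealLeft (k : Type*) [CommRing k] {n : ℕ} {σ : Type*} (τ : Type*)
    (A : σ → Fin n → ℕ) : Ideal (MvPolynomial (σ ⊕ τ) k) :=
  Ideal.map (MvPolynomial.rename (Sum.inl : σ → σ ⊕ τ)) (toricIdeal k A)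

/-- The extension `I_B·R` of `I_B ⊆ k[y]` to `R = k[x,y]`. -/
noncomputable def extIdealRight (k : Type*) [CommRing k] {n : ℕ} (σ : Type*) {τ : Type*}
    (B : τ → Fin n → ℕ) : Ideal (MvPolynomial (σ ⊕ τ) k) :=
  Ideal.map (MvPolynomial.rename (Sum.inr : τ → σ ⊕ τ)) (toricIdeal k B)

/-- `C = k₁A ⋈ k₂B` : `⟨C⟩` is a gluing of `⟨A⟩` and `⟨B⟩`, i.e.
`I_C = I_A·R + I_B·R + ⟨ρ⟩` for a binomial `ρ = x^c - y^d` with `ρ ∉ I_A·R + I_B·R`. -/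
def IsGluing (k : Type*) [CommRing k] {n : ℕ} {σ τ : Type*} [Fintype σ] [Fintype τ]
    (A : σ → Fin n → ℕ) (B : τ → Fin n → ℕ) (k1 k2 : ℕ) : Prop :=
  ∃ (c : σ → ℕ) (d : τ → ℕ),
    ((∏ j, X (Sum.inl j) ^ c j : MvPolynomial (σ ⊕ τ) k) - ∏ j, X (Sum.inr j) ^ d j) ∉
        extIdealLeft k τ A + extIdealRight k σ B ∧
    toricIdeal k (glueList k1 k2 A B) =
      extIdealLeft k τ A + extIdealRight k σ B +
        Ideal.span {((∏ j, X (Sum.inl j) ^ c j : MvPolynomial (σ ⊕ τ) k) -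
          ∏ j, X (Sum.inr j) ^ d j)}

/-- `⟨A⟩` and `⟨B⟩` can be glued. -/
def CanBeGlued (k : Type*) [CommRing k] {n : ℕ} {σ τ : Type*} [Fintype σ] [Fintype τ]
    (A : σ → Fin n → ℕ) (B : τ → Fin n → ℕ) : Prop :=
  ∃ k1 k2 : ℕ, 0 < k1 ∧ 0 < k2 ∧ IsGluing k A B k1 k2

/-- The `ℚ`-span of the columns of `A`. -/
def colSpanQ {n : ℕ} {σ : Type*} (A : σ → Fin n → ℕ) : Submodule ℚ (Fin n → ℚ) :=
  Submodule.span ℚ (Set.range fun j => fun i => (A j i : ℚ))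

/-- `rk A`, the rank over `ℚ` of the matrix whose columns are the vectors of `A`. -/
noncomputable def rkQ {n : ℕ} {σ : Type*} (A : σ → Fin n → ℕ) : ℕ :=
  Module.finrank ℚ (colSpanQ A)

/-- A gluable lattice point of `A` and `B`: a vector `u ∈ ℤ^n` with
`gcd(u_1,…,u_n) = 1` spanning `v(A) ∩ v(B)` over `ℚ`. -/
def IsGluableLatticePoint {n : ℕ} {σ τ : Type*} (A : σ → Fin n → ℕ) (B : τ → Fin n → ℕ)
    (u : Fin n → ℤ) : Prop :=
  Finset.univ.gcd u = 1 ∧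
  Submodule.span ℚ {fun i => ((u i : ℚ))} = colSpanQ A ⊓ colSpanQ B

/-- The additive submonoid of `ℤ^n` generated by the columns of `A`
(the semigroup `⟨A⟩`, viewed inside `ℤ^n`). -/
def intClosure {n : ℕ} {σ : Type*} (A : σ → Fin n → ℕ) : AddSubmonoid (Fin n → ℤ) :=
  AddSubmonoid.closure (Set.range fun j => fun i => (A j i : ℤ))

/-- The semigroup `⟨A⟩ ⊆ ℕ^n` generated by the columns of `A`. -/
def natClosure {n : ℕ} {σ : Type*} (A : σ → Fin n → ℕ) : AddSubmonoid (Fin n → ℕ) :=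
  AddSubmonoid.closure (Set.range A)

/-- The depth of a ring `S` with respect to an ideal `J`: the supremum of the lengths
of regular sequences on `S` consisting of elements of `J`. -/
noncomputable def idealDepth {S : Type*} [CommRing S] (J : Ideal S) : ℕ∞ :=
  sSup {m : ℕ∞ | ∃ rs : List S, (rs.length : ℕ∞) = m ∧ (∀ r ∈ rs, r ∈ J) ∧
    RingTheory.Sequence.IsRegular S rs}

/-- The maximal graded ideal of `k[A]`, generated by the images of the variables. -/
noncomputable def maxGradedIdeal (k : Type*) [CommRing k] {σ : Type*} {n : ℕ}
    (A : σ → Fin n → ℕ) : Ideal (semigroupRing k A) :=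
  Ideal.span (Set.range fun j => Ideal.Quotient.mk (toricIdeal k A) (X j))

/-- The depth of the semigroup ring `k[A]` with respect to its maximal graded ideal. -/
noncomputable def sgrDepth (k : Type*) [CommRing k] {σ : Type*} {n : ℕ}
    (A : σ → Fin n → ℕ) : ℕ∞ :=
  idealDepth (maxGradedIdeal k A)

/-- `k[A]` is Cohen–Macaulay: its depth equals its Krull dimension. -/
def sgrIsCohenMacaulay (k : Type*) [CommRing k] {σ : Type*} {n : ℕ}
    (A : σ → Fin n → ℕ) : Prop :=
  (sgrDepth k A : WithBot ℕ∞) = ringKrullDim (semigroupRing k A)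

open CategoryTheory in
/-- The projective dimension of a module `M` over `R`: the least `m` such that `M` admits a
projective resolution of length `m`. -/
noncomputable def modProjDim (R : Type*) [CommRing R] (M : ModuleCat R) : ℕ∞ :=
  sInf {m : ℕ∞ | ∃ P : ProjectiveResolution M,
    ∀ i : ℕ, m < (i : ℕ∞) → Limits.IsZero (P.complex.X i)}


/-!
Let `w = ∑ cⱼ k₁aⱼ = ∑ dⱼ k₂bⱼ` be the common degree of the two monomials of `ρ ∈ I_C`; `w ≠ 0`,
since otherwise `xᶜ - 1 ∈ I_A` and `yᵈ - 1 ∈ I_B` would put `ρ` in `I_A·R + I_B·R`. As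
`dim (v(A) + v(B)) + dim (v(A) ∩ v(B)) = rk A + rk B`, everything reduces to
`v(A) ∩ v(B) = ℚ w`.

Let `φ` be a linear form with `φ w = 0`. Grading `R` by `deg xⱼ = φ(k₁aⱼ)`, `deg yⱼ = 0`, i.e.
mapping `R` to the group algebra `k[ℚ]`, kills `I_A·R` (the grading factors through `φ_A`),
`I_B·R` and `ρ`, hence all of `I_C`. A vector of `v(A) ∩ v(B)`, after clearing denominators, is
`∑ zⱼ k₁aⱼ` for an integral relation `z` among the columns of `C`, so `x^{z⁺} - x^{z⁻} ∈ I_C`;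
that this binomial has degree `0` says exactly that `φ` vanishes on the vector. Hence
`v(A) ∩ v(B)` lies in the annihilator of the annihilator of `w`, which is `ℚ w`.
-/

lemma sum_mul_nsmul {ι M : Type*} [Fintype ι] [AddCommMonoid M] (e : ι → ℕ) (l : ℕ)
    (x : ι → M) : ∑ j, (e j * l) • x j = l • ∑ j, e j • x j := by
  simp_rw [Finset.smul_sum, mul_comm, mul_smul]

lemma sum_mul_zsmul_nsmul {ι M : Type*} [Fintype ι] [AddCommGroup M] (m : ℤ) (l : ℕ)
    (e : ι → ℤ) (x : ι → M) : ∑ j, (m * e j) • l • x j = (l * m) • ∑ j, e j • x j := by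
  rw [Finset.smul_sum]
  exact Finset.sum_congr rfl fun j _ => by module

lemma toNat_smul_sub_neg_toNat_smul {G : Type*} [AddCommGroup G] (z : ℤ) (x : G) :
    z.toNat • x - (-z).toNat • x = z • x := by
  rw [← natCast_zsmul, ← natCast_zsmul, ← sub_smul, Int.toNat_sub_toNat_neg]

section ColumnSpan

variable {σ τ : Type*} {n : ℕ}

def castVecQ : (Fin n → ℕ) →+ (Fin n → ℚ) := (Nat.castAddMonoidHom ℚ).compLeft (Fin n)

lemma castVecQ_injective : Function.Injective (castVecQ (n := n)) :=
  Nat.cast_injective.comp_left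

lemma colSpanQ_eq_span_castVecQ (A : σ → Fin n → ℕ) :
    colSpanQ A = Submodule.span ℚ (Set.range (castVecQ ∘ A)) := rfl

lemma castVecQ_sum_nsmul_mem_colSpanQ [Fintype σ] (A : σ → Fin n → ℕ) (e : σ → ℕ) :
    castVecQ (∑ j, e j • A j) ∈ colSpanQ A := by
  rw [map_sum]
  refine Submodule.sum_mem _ fun j _ => ?_
  rw [map_nsmul]
  exact Submodule.smul_of_tower_mem _ _ (Submodule.subset_span ⟨j, rfl⟩)

lemma exists_zsmul_eq_sum_zsmul_of_mem_colSpanQ [Fintype σ] {A : σ → Fin n → ℕ}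
    {v : Fin n → ℚ} (hv : v ∈ colSpanQ A) :
    ∃ N : ℤ, N ≠ 0 ∧ ∃ a : σ → ℤ, N • v = ∑ j, a j • castVecQ (A j) := by
  rw [colSpanQ_eq_span_castVecQ, Submodule.mem_span_range_iff_exists_fun] at hv
  obtain ⟨r, rfl⟩ := hv
  obtain ⟨N, hN⟩ := IsLocalization.exist_integer_multiples (nonZeroDivisors ℤ) Finset.univ r
  choose a ha using fun j => hN j (Finset.mem_univ j)
  refine ⟨N, nonZeroDivisors.coe_ne_zero N, a, ?_⟩
  rw [Finset.smul_sum]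
  refine Finset.sum_congr rfl fun j _ => ?_
  rw [← smul_assoc, ← ha j, algebraMap_int_eq, eq_intCast, Int.cast_smul_eq_zsmul]
  rfl

lemma colSpanQ_sum_elim (A : σ → Fin n → ℕ) (B : τ → Fin n → ℕ) :
    colSpanQ (Sum.elim A B) = colSpanQ A ⊔ colSpanQ B := by
  rw [colSpanQ_eq_span_castVecQ, Sum.comp_elim, Set.Sum.elim_range, Submodule.span_union]
  rfl

lemma rkQ_sum_elim_add_finrank_inf (A : σ → Fin n → ℕ) (B : τ → Fin n → ℕ) :
    rkQ (Sum.elim A B) + Module.finrank ℚ ↥(colSpanQ A ⊓ colSpanQ B) = rkQ A + rkQ B := by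
  rw [rkQ, colSpanQ_sum_elim]
  exact Submodule.finrank_sup_add_finrank_inf_eq _ _

end ColumnSpan

section Toric

variable {k : Type*} [CommRing k] {σ : Type*} {n : ℕ}

lemma prod_prod_X_pow_pow [Fintype σ] {R : Type*} [CommSemiring R] (v : σ → Fin n → ℕ)
    (e : σ → ℕ) :
    ∏ j, (∏ i, (X i : MvPolynomial (Fin n) R) ^ v j i) ^ e j =
      ∏ i, X i ^ (∑ j, e j • v j) i := by
  simp_rw [← Finset.prod_pow, ← pow_mul, Finset.sum_apply]
  rw [Finset.prod_comm]
  simp_rw [Finset.prod_pow_eq_pow_sum, Pi.smul_apply, smul_eq_mul, mul_comm]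

lemma prod_X_pow_injective {R : Type*} [CommSemiring R] [Nontrivial R] :
    Function.Injective fun e : Fin n → ℕ => ∏ i, (X i : MvPolynomial (Fin n) R) ^ e i := by
  have hmon (e : Fin n → ℕ) : ∏ i, (X i : MvPolynomial (Fin n) R) ^ e i =
      monomial (Finsupp.equivFunOnFinite.symm e) 1 := by
    rw [monomial_eq, C_1, one_mul, Finsupp.prod_fintype _ _ fun _ => pow_zero _]
    rfl
  intro e f h
  simp only [hmon] at h
  exact Finsupp.equivFunOnFinite.symm.injective (monomial_left_injective one_ne_zero h)

lemma aeval_toric_prod_X_pow {τ : Type*} [Fintype τ] (A : σ → Fin n → ℕ) (f : τ → σ)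
    (e : τ → ℕ) :
    aeval (R := k) (fun j => ∏ i, (X i : MvPolynomial (Fin n) k) ^ A j i)
        (∏ j, X (f j) ^ e j) = ∏ i, X i ^ (∑ j, e j • A (f j)) i := by
  simp only [map_prod, map_pow, aeval_X]
  exact prod_prod_X_pow_pow (A ∘ f) e

variable [Nontrivial k] [Fintype σ]

lemma prod_X_pow_sub_mem_toricIdeal_iff (A : σ → Fin n → ℕ) (e f : σ → ℕ) :
    ∏ j, X j ^ e j - ∏ j, X j ^ f j ∈ toricIdeal k A ↔ ∑ j, e j • A j = ∑ j, f j • A j := by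
  have haeval (e : σ → ℕ) : aeval (fun j => ∏ i, X i ^ A j i) (∏ j, X j ^ e j : MvPolynomial σ k)
      = ∏ i, X i ^ (∑ j, e j • A j) i :=
    aeval_toric_prod_X_pow A id e
  rw [toricIdeal, RingHom.mem_ker, map_sub, sub_eq_zero, haeval, haeval]
  exact prod_X_pow_injective.eq_iff

variable (k) in
noncomputable def latticeBinomial (z : σ → ℤ) : MvPolynomial σ k :=
  ∏ j, X j ^ (z j).toNat - ∏ j, X j ^ (-z j).toNat

lemma latticeBinomial_mem_toricIdeal_iff (A : σ → Fin n → ℕ) (z : σ → ℤ) :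
    latticeBinomial k z ∈ toricIdeal k A ↔ ∑ j, z j • castVecQ (A j) = 0 := by
  rw [latticeBinomial, prod_X_pow_sub_mem_toricIdeal_iff, ← castVecQ_injective.eq_iff,
    ← sub_eq_zero, map_sum, map_sum, ← Finset.sum_sub_distrib]
  refine Eq.congr_left (Finset.sum_congr rfl fun j _ => ?_)
  rw [map_nsmul, map_nsmul, toNat_smul_sub_neg_toNat_smul]

end Toric

section Weight

variable (k : Type*) [CommRing k] {σ G : Type*} [AddCommMonoid G]

noncomputable def weightHom (g : σ → G) : MvPolynomial σ k →ₐ[k] AddMonoidAlgebra k G :=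
  aeval fun j => AddMonoidAlgebra.single (g j) 1

variable {k}

lemma weightHom_comp_rename {σ' : Type*} (g : σ' → G) (f : σ → σ') :
    (weightHom k g).comp (rename f) = weightHom k (g ∘ f) := by
  ext j
  simp [weightHom]

lemma toricIdeal_le_ker_weightHom {n : ℕ} (A : σ → Fin n → ℕ) (L : (Fin n → ℕ) →+ G) :
    toricIdeal k A ≤ RingHom.ker (weightHom k (L ∘ A)) := by
  have hfac : weightHom k (L ∘ A) =
      (weightHom k fun i => L (Pi.single i 1)).comp (aeval fun j => ∏ i, X i ^ A j i) := by
    refine MvPolynomial.algHom_ext fun j => ?_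
    classical
    conv_lhs => rw [weightHom, aeval_X, Function.comp_apply, pi_eq_sum_univ' (A j)]
    simp [weightHom, -nsmul_eq_mul, map_nsmul]
  intro x hx
  rw [toricIdeal, RingHom.mem_ker] at hx
  rw [RingHom.mem_ker, hfac, AlgHom.comp_apply, hx, map_zero]

lemma map_rename_toricIdeal_le_ker_weightHom {σ' : Type*} {n : ℕ} (A : σ → Fin n → ℕ)
    (f : σ → σ') (g : σ' → G) (L : (Fin n → ℕ) →+ G) (hg : g ∘ f = L ∘ A) :
    Ideal.map (rename f) (toricIdeal k A) ≤ RingHom.ker (weightHom k g) := by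
  refine Ideal.map_le_iff_le_comap.2 fun x hx => ?_
  rw [Ideal.mem_comap, RingHom.mem_ker, ← AlgHom.comp_apply, weightHom_comp_rename, hg]
  exact toricIdeal_le_ker_weightHom A L hx

lemma sum_zsmul_eq_zero_of_weightHom_latticeBinomial {G : Type*} [AddCommGroup G]
    [Nontrivial k] [Fintype σ] (g : σ → G) (z : σ → ℤ)
    (h : weightHom k g (latticeBinomial k z) = 0) : ∑ j, z j • g j = 0 := by
  simp only [latticeBinomial, weightHom, map_sub, map_prod, map_pow, aeval_X,
    AddMonoidAlgebra.single_pow, one_pow, AddMonoidAlgebra.prod_single,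
    Finset.prod_const_one] at h
  rw [sub_eq_zero, AddMonoidAlgebra.single_left_inj one_ne_zero, ← sub_eq_zero,
    ← Finset.sum_sub_distrib] at h
  rw [← h]
  exact Finset.sum_congr rfl fun j _ => (toNat_smul_sub_neg_toNat_smul (z j) (g j)).symm

end Weight

section Gluing

variable {k : Type*} [CommRing k] {σ τ : Type*} [Fintype σ] [Fintype τ] {n : ℕ}
  {A : σ → Fin n → ℕ} {B : τ → Fin n → ℕ} {k1 k2 : ℕ} {c : σ → ℕ} {d : τ → ℕ}

variable (k c d) in
noncomputable def gluingBinomial : MvPolynomial (σ ⊕ τ) k :=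
  ∏ j, X (Sum.inl j) ^ c j - ∏ j, X (Sum.inr j) ^ d j

omit [Fintype σ] [Fintype τ] in
lemma glueList_inl (j : σ) : glueList k1 k2 A B (Sum.inl j) = k1 • A j := rfl

omit [Fintype σ] [Fintype τ] in
lemma glueList_inr (j : τ) : glueList k1 k2 A B (Sum.inr j) = k2 • B j := rfl

lemma exists_glueList_kernel_vector_of_mem_inf (hk1 : 0 < k1) (hk2 : 0 < k2)
    {v : Fin n → ℚ} (hv : v ∈ colSpanQ A ⊓ colSpanQ B) :
    ∃ N : ℤ, N ≠ 0 ∧ ∃ z : σ ⊕ τ → ℤ,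
      ∑ x, z x • castVecQ (glueList k1 k2 A B x) = 0 ∧
      ∑ j, z (Sum.inl j) • k1 • castVecQ (A j) = N • v := by
  obtain ⟨N₁, hN₁, a, ha⟩ := exists_zsmul_eq_sum_zsmul_of_mem_colSpanQ hv.1
  obtain ⟨N₂, hN₂, b, hb⟩ := exists_zsmul_eq_sum_zsmul_of_mem_colSpanQ hv.2
  refine ⟨k1 * k2 * N₁ * N₂, by positivity, Sum.elim (fun j => k2 * N₂ * a j)
    (fun j => -(k1 * N₁) * b j), ?_, ?_⟩
  · simp only [Fintype.sum_sum_type, Sum.elim_inl, Sum.elim_inr, glueList_inl, glueList_inr,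
      map_nsmul, sum_mul_zsmul_nsmul, ← ha, ← hb]
    module
  · simp only [Sum.elim_inl, sum_mul_zsmul_nsmul, ← ha]
    module

lemma toricIdeal_glueList_le_ker_weightHom {G : Type*} [AddCommMonoid G]
    (hIC : toricIdeal k (glueList k1 k2 A B) =
      extIdealLeft k τ A + extIdealRight k σ B + Ideal.span {gluingBinomial k c d})
    (L : (Fin n → ℕ) →+ G) (hL : L (∑ j, (c j * k1) • A j) = 0) :
    toricIdeal k (glueList k1 k2 A B) ≤
      RingHom.ker (weightHom k (Sum.elim (fun j => k1 • L (A j)) 0)) := by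
  rw [hIC]
  refine sup_le (sup_le ?_ ?_) ?_
  · exact map_rename_toricIdeal_le_ker_weightHom A Sum.inl _ (k1 • L) rfl
  · exact map_rename_toricIdeal_le_ker_weightHom B Sum.inr _ 0 rfl
  · rw [Ideal.span_le, Set.singleton_subset_iff, SetLike.mem_coe, RingHom.mem_ker]
    simp only [map_sum, mul_smul, map_nsmul] at hL
    simp [gluingBinomial, weightHom, hL]

variable [Nontrivial k]

lemma sum_smul_eq_of_gluingBinomial_mem_toricIdeal
    (hρ : gluingBinomial k c d ∈ toricIdeal k (glueList k1 k2 A B)) :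
    ∑ j, (c j * k1) • A j = ∑ j, (d j * k2) • B j := by
  rw [gluingBinomial, toricIdeal, RingHom.mem_ker, map_sub, sub_eq_zero, aeval_toric_prod_X_pow,
    aeval_toric_prod_X_pow] at hρ
  simpa only [glueList_inl, glueList_inr, smul_smul] using prod_X_pow_injective hρ

lemma gluingBinomial_mem_extIdealLeft_sup_extIdealRight (hA : ∑ j, c j • A j = 0)
    (hB : ∑ j, d j • B j = 0) :
    gluingBinomial k c d ∈ extIdealLeft k τ A + extIdealRight k σ B := by
  have hxA : ∏ j, X j ^ c j - 1 ∈ toricIdeal k A := by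
    simpa using (prod_X_pow_sub_mem_toricIdeal_iff A c 0).2 (by simpa using hA)
  have hyB : ∏ j, X j ^ d j - 1 ∈ toricIdeal k B := by
    simpa using (prod_X_pow_sub_mem_toricIdeal_iff B d 0).2 (by simpa using hB)
  have hx := Ideal.mem_map_of_mem (rename (R := k) (Sum.inl : σ → σ ⊕ τ)) hxA
  have hy := Ideal.mem_map_of_mem (rename (R := k) (Sum.inr : τ → σ ⊕ τ)) hyB
  simp only [map_sub, map_prod, map_pow, rename_X, map_one] at hx hy
  rw [gluingBinomial, ← sub_sub_sub_cancel_right _ _ 1]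
  exact sub_mem (Submodule.mem_sup_left hx) (Submodule.mem_sup_right hy)

lemma sum_smul_ne_zero_of_gluingBinomial_notMem (hk1 : 0 < k1) (hk2 : 0 < k2)
    (hW : ∑ j, (c j * k1) • A j = ∑ j, (d j * k2) • B j)
    (hρ : gluingBinomial k c d ∉ extIdealLeft k τ A + extIdealRight k σ B) :
    ∑ j, (c j * k1) • A j ≠ 0 := by
  intro h0
  refine hρ (gluingBinomial_mem_extIdealLeft_sup_extIdealRight ?_ ?_)
  · rwa [sum_mul_nsmul, smul_eq_zero, or_iff_right hk1.ne'] at h0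
  · rwa [hW, sum_mul_nsmul, smul_eq_zero, or_iff_right hk2.ne'] at h0

lemma dual_apply_eq_zero_of_mem_colSpanQ_inf (hk1 : 0 < k1) (hk2 : 0 < k2)
    (hIC : toricIdeal k (glueList k1 k2 A B) =
      extIdealLeft k τ A + extIdealRight k σ B + Ideal.span {gluingBinomial k c d})
    (φ : Module.Dual ℚ (Fin n → ℚ)) (hφ : φ (castVecQ (∑ j, (c j * k1) • A j)) = 0)
    {v : Fin n → ℚ} (hv : v ∈ colSpanQ A ⊓ colSpanQ B) : φ v = 0 := by
  obtain ⟨N, hN, z, hz, hzv⟩ := exists_glueList_kernel_vector_of_mem_inf hk1 hk2 hv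
  have hker := toricIdeal_glueList_le_ker_weightHom hIC (φ.toAddMonoidHom.comp castVecQ) hφ
    ((latticeBinomial_mem_toricIdeal_iff _ z).2 hz)
  have hsum := sum_zsmul_eq_zero_of_weightHom_latticeBinomial _ z hker
  simp only [Fintype.sum_sum_type, Sum.elim_inl, Sum.elim_inr, Pi.zero_apply, smul_zero,
    Finset.sum_const_zero, add_zero, AddMonoidHom.coe_comp, LinearMap.toAddMonoidHom_coe,
    Function.comp_apply] at hsum
  have hNv : φ (N • v) = 0 := by
    rw [← hzv, map_sum]
    simpa only [map_zsmul, map_nsmul] using hsum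
  rwa [map_zsmul, smul_eq_zero, or_iff_right hN] at hNv

lemma colSpanQ_inf_eq_span_singleton (hk1 : 0 < k1) (hk2 : 0 < k2)
    (hW : ∑ j, (c j * k1) • A j = ∑ j, (d j * k2) • B j)
    (hIC : toricIdeal k (glueList k1 k2 A B) =
      extIdealLeft k τ A + extIdealRight k σ B + Ideal.span {gluingBinomial k c d}) :
    colSpanQ A ⊓ colSpanQ B = Submodule.span ℚ {castVecQ (∑ j, (c j * k1) • A j)} := by
  refine le_antisymm (fun v hv => ?_) ?_
  · rw [← Subspace.forall_mem_dualAnnihilator_apply_eq_zero_iff]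
    exact fun φ hφ => dual_apply_eq_zero_of_mem_colSpanQ_inf hk1 hk2 hIC φ
      ((Submodule.mem_dualAnnihilator φ).1 hφ _ (Submodule.mem_span_singleton_self _)) hv
  · rw [Submodule.span_singleton_le_iff_mem, Submodule.mem_inf]
    exact ⟨castVecQ_sum_nsmul_mem_colSpanQ A _, hW ▸ castVecQ_sum_nsmul_mem_colSpanQ B _⟩

lemma finrank_colSpanQ_inf_eq_one_of_isGluing (hk1 : 0 < k1) (hk2 : 0 < k2)
    (h : IsGluing k A B k1 k2) : Module.finrank ℚ ↥(colSpanQ A ⊓ colSpanQ B) = 1 := by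
  obtain ⟨c, d, hρ, hIC⟩ := h
  have hρC : gluingBinomial k c d ∈ toricIdeal k (glueList k1 k2 A B) := by
    rw [hIC]
    exact Ideal.mem_sup_right (Ideal.subset_span rfl)
  have hW := sum_smul_eq_of_gluingBinomial_mem_toricIdeal hρC
  rw [colSpanQ_inf_eq_span_singleton hk1 hk2 hW hIC, finrank_span_singleton]
  exact (map_ne_zero_iff _ castVecQ_injective).2
    (sum_smul_ne_zero_of_gluingBinomial_notMem hk1 hk2 hW hρ)

end Gluing

theorem gluing_rank_add_general (k : Type*) [Field k] {n p q : ℕ}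
    (A : Fin p → Fin n → ℕ) (B : Fin q → Fin n → ℕ)
    (k1 k2 : ℕ) (hk1 : 0 < k1) (hk2 : 0 < k2)
    (h : IsGluing k A B k1 k2) (hC : rkQ (Sum.elim A B) = n) :
    rkQ A + rkQ B = n + 1 ∧ (rkQ A = n → rkQ B = 1) := by
  have hinf := finrank_colSpanQ_inf_eq_one_of_isGluing hk1 hk2 h
  have hrank := rkQ_sum_elim_add_finrank_inf A B
  omega

/-- If `C = k₁A ⋈ k₂B` and `rk (A|B) = n`, then `rk A + rk B = n + 1`;
in particular if moreover `rk A = n`, then `rk B = 1`. -/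
theorem gluing_rank_add (k : Type*) [Field k] {n p q : ℕ} (hn : 1 ≤ n)
    (A : Fin p → Fin n → ℕ) (B : Fin q → Fin n → ℕ)
    (k1 k2 : ℕ) (hk1 : 0 < k1) (hk2 : 0 < k2)
    (h : IsGluing k A B k1 k2) (hC : rkQ (Sum.elim A B) = n) :
    rkQ A + rkQ B = n + 1 ∧ (rkQ A = n → rkQ B = 1) :=
  gluing_rank_add_general k A B k1 k2 hk1 hk2 h hC
end

section
/- Let k be a field, p, q ≥ 3, and let 0 < a_1 < … < a_{p−2} < c and 0 < b_1 < … < b_{q−2} < d be integers. Fix i ∈ {1,…,p−2} with gcd(d, a_i) = 1, and write c = m·a_i − r with m ≥ 2 and 0 ≤ r < a_i. Define lists A' = (a'_1,…,a'_p) and B' = (b'_1,…,b'_q) in ℕ³ by: a'_1 = (c + r, 0, 0), a'_{j+1} = (c − a_j + r, a_j, 0) for j = 1,…,p−2, a'_p = (r, c, 0); and b'_1 = ((m−1)d, d, 0), b'_{j+1} = ((m−1)d, d − b_j, b_j) for j = 1,…,q−2, b'_q = ((m−1)d, 0, d). Then C = dA' ⋈ a_iB'; more precisely, for C = dA' ⊔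 a_iB' one has I_C = I_{A'}·R + I_{B'}·R + ⟨x_{i+1} − y_1⟩. -/
/-!
A binomial `x^u y^v - x^u' y^v'` of `I_C` satisfies `d • A'u + a_i • B'v = d • A'u' + a_i • B'v'`.
All columns of `A'` have last coordinate `0`, so `B'v` and `B'v'` share their last coordinate;
all columns of `B'` have first coordinate `(m-1)d` and middle plus last coordinate `d`, so then
`B'v' - B'v = N • b'_1` with `N` the difference of the total degrees of `v'` and `v`. As
`d • a'_{i+1} = a_i • b'_1`, cancelling `d` gives `A'u - A'u' = N • a'_{i+1}`. Hence
`x^u - x^u' x_{i+1}^N ∈ I_{A'}` and `y^v' - y^v y_1^N ∈ I_{B'}`, and modulo `x_{i+1} - y_1` the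
binomial vanishes. Evaluating `x ↦ 1`, `y ↦ 0^{B'}` kills `I_{A'}·R + I_{B'}·R` but sends
`x_{i+1} - y_1` to `1`.
-/

open MvPolynomial

/-- The list `A'` in `ℕ³` (with `p` interior entries): `a'_1 = (c+r, 0, 0)`,
`a'_{j+1} = (c - a_j + r, a_j, 0)`, `a'_p = (r, c, 0)`. -/
def caseListA (p : ℕ) (a : Fin p → ℕ) (c r : ℕ) : (Unit ⊕ Fin p ⊕ Unit) → Fin 3 → ℕ :=
  Sum.elim (fun _ => ![c + r, 0, 0])
    (Sum.elim (fun j => ![c - a j + r, a j, 0]) (fun _ => ![r, c, 0]))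

/-- The list `B'` in `ℕ³` (with `q` interior entries): `b'_1 = ((m−1)d, d, 0)`,
`b'_{j+1} = ((m−1)d, d − b_j, b_j)`, `b'_q = ((m−1)d, 0, d)`. -/
def caseListB (q : ℕ) (b : Fin q → ℕ) (d m : ℕ) : (Unit ⊕ Fin q ⊕ Unit) → Fin 3 → ℕ :=
  Sum.elim (fun _ => ![(m - 1) * d, d, 0])
    (Sum.elim (fun j => ![(m - 1) * d, d - b j, b j]) (fun _ => ![(m - 1) * d, 0, d]))

lemma prod_pow_piSingle {M ι : Type*} [CommMonoid M] [Fintype ι] [DecidableEq ι] (g : ι → M)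
    (i : ι) (N : ℕ) : ∏ j, g j ^ (Pi.single i N : ι → ℕ) j = g i ^ N := by
  rw [Fintype.prod_eq_single i fun j hj => by rw [Pi.single_eq_of_ne hj, pow_zero],
    Pi.single_eq_same]

lemma mul_sub_mul_mem_of_sub_mem {R : Type*} [CommRing R] {J : Ideal R} {P P' Q Q' x y : R}
    (N : ℕ) (hP : P - P' * x ^ N ∈ J) (hQ : Q' - Q * y ^ N ∈ J) (hxy : x - y ∈ J) :
    P * Q - P' * Q' ∈ J := by
  rw [← Ideal.Quotient.eq] at hP hQ hxy ⊢
  simp only [map_mul, map_pow] at hP hQ hxy ⊢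
  rw [hP, hQ, hxy]
  ring

lemma eq_add_nsmul_of_smul_add_smul_eq {M : Type*} [AddCancelCommMonoid M] [IsAddTorsionFree M]
    {k₁ k₂ N : ℕ} {α α' β β' x y : M} (hk₁ : k₁ ≠ 0)
    (hdeg : k₁ • α + k₂ • β = k₁ • α' + k₂ • β') (hβ : β' = β + N • y)
    (hglue : k₁ • x = k₂ • y) :
    α = α' + N • x := by
  refine nsmul_right_injective hk₁ (add_right_cancel (b := k₂ • β) ?_)
  simp only [hdeg, hβ, smul_add, smul_comm k₁ N x, hglue, smul_comm k₂ N y]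
  abel

section Toric

variable {k : Type*} [CommRing k] {σ : Type*} [Fintype σ] {n : ℕ}

lemma monomial_one_eq_prod_X_pow (u : σ →₀ ℕ) :
    (monomial u 1 : MvPolynomial σ k) = ∏ j, X j ^ u j := by
  rw [monomial_eq, C_1, one_mul, Finsupp.prod_fintype _ _ fun _ => pow_zero _]

lemma aeval_prod_X_pow (A : σ → Fin n → ℕ) (u : σ → ℕ) :
    aeval (R := k) (fun j => ∏ t, (X t : MvPolynomial (Fin n) k) ^ A j t) (∏ j, X j ^ u j) =
      ∏ t, X t ^ Fintype.linearCombination ℕ A u t := by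
  simp only [map_prod, map_pow, aeval_X, ← Finset.prod_pow, ← pow_mul,
    Fintype.linearCombination_apply, Finset.sum_apply, Pi.smul_apply, smul_eq_mul]
  rw [Finset.prod_comm]
  exact Finset.prod_congr rfl fun t _ => by simp only [Finset.prod_pow_eq_pow_sum, mul_comm]

lemma prod_X_pow_sub_mem_toricIdeal (A : σ → Fin n → ℕ) {u u' : σ → ℕ}
    (h : Fintype.linearCombination ℕ A u = Fintype.linearCombination ℕ A u') :
    ∏ j, X j ^ u j - ∏ j, X j ^ u' j ∈ toricIdeal k A := by
  rw [toricIdeal, RingHom.mem_ker, map_sub, aeval_prod_X_pow, aeval_prod_X_pow, h, sub_self]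

lemma aeval_monomial_toric (A : σ → Fin n → ℕ) (u : σ →₀ ℕ) (c : k) :
    aeval (R := k) (fun j => ∏ t, (X t : MvPolynomial (Fin n) k) ^ A j t) (monomial u c) =
      monomial (Finsupp.equivFunOnFinite.symm (Fintype.linearCombination ℕ A u)) c := by
  rw [← mul_one c, ← smul_eq_mul, ← smul_monomial, map_smul, monomial_one_eq_prod_X_pow,
    aeval_prod_X_pow, ← smul_monomial, monomial_one_eq_prod_X_pow]
  rfl

lemma toricIdeal_le_of_forall_prod_sub_mem (A : σ → Fin n → ℕ) {J : Ideal (MvPolynomial σ k)}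
    (h : ∀ u u' : σ → ℕ, Fintype.linearCombination ℕ A u = Fintype.linearCombination ℕ A u' →
      ∏ j, X j ^ u j - ∏ j, X j ^ u' j ∈ J) :
    toricIdeal k A ≤ J := by
  classical
  intro f hf
  -- Pair each monomial of `f` with a fixed monomial of `f` of the same degree: the fixed ones
  -- cancel, since the coefficients of `f` over each degree sum to zero.
  set deg : (σ →₀ ℕ) → Fin n → ℕ := fun u => Fintype.linearCombination ℕ A u
  set rep := Function.invFunOn deg f.support
  have hrep (u) (hu : u ∈ f.support) : deg (rep (deg u)) = deg u :=
    Function.invFunOn_eq ⟨u, hu, rfl⟩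
  have hfiber (w : Fin n → ℕ) : ∑ u ∈ f.support with deg u = w, coeff u f = 0 := by
    have h0 := congrArg (coeff (Finsupp.equivFunOnFinite.symm w)) hf
    rw [← support_sum_monomial_coeff f, map_sum, coeff_sum] at h0
    simp only [aeval_monomial_toric, coeff_monomial, EmbeddingLike.apply_eq_iff_eq] at h0
    rw [Finset.sum_filter]
    simpa [eq_comm] using h0
  have hrepSum : ∑ u ∈ f.support, monomial (rep (deg u)) (coeff u f) = 0 := by
    rw [← Finset.sum_fiberwise_of_maps_to (g := deg) fun u hu => Finset.mem_image_of_mem deg hu]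
    refine Finset.sum_eq_zero fun w _ => ?_
    rw [Finset.sum_congr rfl fun u hu => by rw [(Finset.mem_filter.1 hu).2], ← map_sum,
      hfiber, map_zero]
  have hf_eq : f = ∑ u ∈ f.support,
      C (coeff u f) * (∏ j, X j ^ u j - ∏ j, X j ^ rep (deg u) j) := by
    simp only [← monomial_one_eq_prod_X_pow, mul_sub, C_mul_monomial, mul_one,
      Finset.sum_sub_distrib, hrepSum, sub_zero, support_sum_monomial_coeff]
  rw [hf_eq]
  exact J.sum_mem fun u hu => J.mul_mem_left _ (h _ _ (hrep u hu).symm)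

end Toric

section Gluing

variable {k : Type*} [CommRing k] {n : ℕ} {σ τ : Type*}

lemma toricIdeal_le_ker_aeval {S : Type*} [CommRing S] [Algebra k S] (A : σ → Fin n → ℕ)
    (s : Fin n → S) :
    toricIdeal k A ≤ RingHom.ker (aeval (R := k) fun j => ∏ t, s t ^ A j t) := by
  intro f hf
  have hs : (fun j => ∏ t, s t ^ A j t) =
      fun j => aeval s (∏ t, (X t : MvPolynomial (Fin n) k) ^ A j t) := by
    simp only [map_prod, map_pow, aeval_X]
  rw [RingHom.mem_ker, hs, ← comp_aeval_apply, hf, map_zero]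

lemma map_rename_toricIdeal_le (f : σ → τ) (K : ℕ) (A : σ → Fin n → ℕ) (C : τ → Fin n → ℕ)
    (h : ∀ j, C (f j) = K • A j) :
    Ideal.map (rename f) (toricIdeal k A) ≤ toricIdeal k C := by
  rw [Ideal.map_le_iff_le_comap]
  intro g hg
  have hC : (fun j => ∏ t, (X t : MvPolynomial (Fin n) k) ^ C j t) ∘ f =
      fun j => ∏ t, (X t ^ K) ^ A j t := by
    ext1 j
    simp only [Function.comp_apply, h, Pi.smul_apply, smul_eq_mul, pow_mul]
  rw [Ideal.mem_comap, toricIdeal, RingHom.mem_ker, aeval_rename, hC]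
  exact toricIdeal_le_ker_aeval A _ hg

lemma extIdealLeft_add_extIdealRight_le_ker_aeval {S : Type*} [CommRing S] [Algebra k S]
    (A : σ → Fin n → ℕ) (B : τ → Fin n → ℕ) (s s' : Fin n → S) :
    extIdealLeft k τ A + extIdealRight k σ B ≤ RingHom.ker (aeval (R := k)
      (Sum.elim (fun j => ∏ t, s t ^ A j t) fun j => ∏ t, s' t ^ B j t)) := by
  refine sup_le (Ideal.map_le_iff_le_comap.2 fun f hf => ?_)
    (Ideal.map_le_iff_le_comap.2 fun f hf => ?_) <;>
    rw [Ideal.mem_comap, RingHom.mem_ker, aeval_rename]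
  · exact toricIdeal_le_ker_aeval A s hf
  · exact toricIdeal_le_ker_aeval B s' hf

lemma X_sub_X_notMem_extIdealLeft_add_extIdealRight [Nontrivial k] (A : σ → Fin n → ℕ)
    (B : τ → Fin n → ℕ) (j₀ : σ) (l₀ : τ) (hB : B l₀ ≠ 0) :
    X (Sum.inl j₀) - X (Sum.inr l₀) ∉ extIdealLeft k τ A + extIdealRight k σ B := by
  intro hmem
  obtain ⟨t, ht⟩ : ∃ t, B l₀ t ≠ 0 := Function.ne_iff.1 hB
  have h := extIdealLeft_add_extIdealRight_le_ker_aeval A B (fun _ => (1 : k)) (fun _ => 0) hmem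
  have h0 : ∏ t, (0 : k) ^ B l₀ t = 0 := Finset.prod_eq_zero (Finset.mem_univ t) (zero_pow ht)
  simp [h0] at h

lemma X_sub_X_mem_toricIdeal_glueList {k₁ k₂ : ℕ} {A : σ → Fin n → ℕ} {B : τ → Fin n → ℕ}
    {j₀ : σ} {l₀ : τ} (h : k₁ • A j₀ = k₂ • B l₀) :
    X (Sum.inl j₀) - X (Sum.inr l₀) ∈ toricIdeal k (glueList k₁ k₂ A B) := by
  rw [toricIdeal, RingHom.mem_ker, map_sub, aeval_X, aeval_X, sub_eq_zero]
  exact Finset.prod_congr rfl fun t _ => congrArg _ (congrFun h t)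

variable [Fintype σ] [Fintype τ]

lemma linearCombination_glueList (k₁ k₂ : ℕ) (A : σ → Fin n → ℕ)
    (B : τ → Fin n → ℕ) (w : σ ⊕ τ → ℕ) :
    Fintype.linearCombination ℕ (glueList k₁ k₂ A B) w =
      k₁ • Fintype.linearCombination ℕ A (w ∘ Sum.inl) +
        k₂ • Fintype.linearCombination ℕ B (w ∘ Sum.inr) := by
  simp only [Fintype.linearCombination_apply, Fintype.sum_sum_type, Finset.smul_sum,
    Function.comp_apply]
  congr 1 <;> refine Finset.sum_congr rfl fun j _ => funext fun t => ?_ <;>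
    simp [glueList, mul_left_comm]

lemma prod_X_pow_sum_type (w : σ ⊕ τ → ℕ) :
    ∏ j, (X j : MvPolynomial (σ ⊕ τ) k) ^ w j =
      rename Sum.inl (∏ j, X j ^ w (Sum.inl j)) * rename Sum.inr (∏ j, X j ^ w (Sum.inr j)) := by
  simp only [Fintype.prod_sum_type, map_prod, map_pow, rename_X]

lemma prod_X_pow_add_single [DecidableEq σ] (u : σ → ℕ) (j₀ : σ) (N : ℕ) :
    ∏ j, (X j : MvPolynomial σ k) ^ (u + Pi.single j₀ N : σ → ℕ) j =
      (∏ j, X j ^ u j) * X j₀ ^ N := by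
  simp only [Pi.add_apply, pow_add, Finset.prod_mul_distrib, prod_pow_piSingle]

def HasGluingShifts (k₁ k₂ : ℕ) (A : σ → Fin n → ℕ) (B : τ → Fin n → ℕ) (j₀ : σ) (l₀ : τ) :
    Prop :=
  ∀ (u u' : σ → ℕ) (v v' : τ → ℕ),
    k₁ • Fintype.linearCombination ℕ A u + k₂ • Fintype.linearCombination ℕ B v =
      k₁ • Fintype.linearCombination ℕ A u' + k₂ • Fintype.linearCombination ℕ B v' →
    ∃ N : ℕ,
      (Fintype.linearCombination ℕ A u = Fintype.linearCombination ℕ A u' + N • A j₀ ∧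
        Fintype.linearCombination ℕ B v' = Fintype.linearCombination ℕ B v + N • B l₀) ∨
      (Fintype.linearCombination ℕ A u' = Fintype.linearCombination ℕ A u + N • A j₀ ∧
        Fintype.linearCombination ℕ B v = Fintype.linearCombination ℕ B v' + N • B l₀)

variable {k₁ k₂ : ℕ} {A : σ → Fin n → ℕ} {B : τ → Fin n → ℕ} {j₀ : σ} {l₀ : τ}

lemma prod_X_pow_sub_mem_of_shift {w w' : σ ⊕ τ → ℕ} (N : ℕ)
    (hA : Fintype.linearCombination ℕ A (w ∘ Sum.inl) =
      Fintype.linearCombination ℕ A (w' ∘ Sum.inl) + N • A j₀)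
    (hB : Fintype.linearCombination ℕ B (w' ∘ Sum.inr) =
      Fintype.linearCombination ℕ B (w ∘ Sum.inr) + N • B l₀) :
    ∏ j, X j ^ w j - ∏ j, X j ^ w' j ∈ extIdealLeft k τ A + extIdealRight k σ B +
      Ideal.span {X (Sum.inl j₀) - X (Sum.inr l₀)} := by
  classical
  have hxA := prod_X_pow_sub_mem_toricIdeal (k := k) A (u := w ∘ Sum.inl)
    (u' := w' ∘ Sum.inl + Pi.single j₀ N)
    (by rw [map_add, Fintype.linearCombination_apply_single, hA])
  have hyB := prod_X_pow_sub_mem_toricIdeal (k := k) B (u := w' ∘ Sum.inr)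
    (u' := w ∘ Sum.inr + Pi.single l₀ N)
    (by rw [map_add, Fintype.linearCombination_apply_single, hB])
  rw [prod_X_pow_add_single] at hxA hyB
  rw [prod_X_pow_sum_type, prod_X_pow_sum_type]
  refine mul_sub_mul_mem_of_sub_mem N ?_ ?_ (Ideal.mem_sup_right (Ideal.mem_span_singleton_self _))
  · replace hxA : _ ∈ extIdealLeft k τ A := Ideal.mem_map_of_mem _ hxA
    simp only [map_sub, map_mul, map_pow, rename_X, Function.comp_apply] at hxA
    exact Ideal.mem_sup_left (Ideal.mem_sup_left hxA)
  · replace hyB : _ ∈ extIdealRight k σ B := Ideal.mem_map_of_mem _ hyB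
    simp only [map_sub, map_mul, map_pow, rename_X, Function.comp_apply] at hyB
    exact Ideal.mem_sup_left (Ideal.mem_sup_right hyB)

lemma toricIdeal_glueList_le (hshift : HasGluingShifts k₁ k₂ A B j₀ l₀) :
    toricIdeal k (glueList k₁ k₂ A B) ≤ extIdealLeft k τ A + extIdealRight k σ B +
      Ideal.span {X (Sum.inl j₀) - X (Sum.inr l₀)} := by
  refine toricIdeal_le_of_forall_prod_sub_mem _ fun w w' hdeg => ?_
  rw [linearCombination_glueList, linearCombination_glueList] at hdeg
  obtain ⟨N, ⟨hA, hB⟩ | ⟨hA, hB⟩⟩ := hshift _ _ _ _ hdeg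
  · exact prod_X_pow_sub_mem_of_shift N hA hB
  · rw [← neg_mem_iff, neg_sub]
    exact prod_X_pow_sub_mem_of_shift N hA hB

lemma toricIdeal_glueList_eq (hglue : k₁ • A j₀ = k₂ • B l₀)
    (hshift : HasGluingShifts k₁ k₂ A B j₀ l₀) :
    toricIdeal k (glueList k₁ k₂ A B) = extIdealLeft k τ A + extIdealRight k σ B +
      Ideal.span {X (Sum.inl j₀) - X (Sum.inr l₀)} := by
  refine le_antisymm (toricIdeal_glueList_le hshift) (sup_le (sup_le ?_ ?_) ?_)
  · exact map_rename_toricIdeal_le _ k₁ A _ fun _ => rfl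
  · exact map_rename_toricIdeal_le _ k₂ B _ fun _ => rfl
  · rw [Ideal.span_le, Set.singleton_subset_iff]
    exact X_sub_X_mem_toricIdeal_glueList hglue

lemma isGluing_of_toricIdeal_glueList_eq [Nontrivial k] (hB : B l₀ ≠ 0)
    (h : toricIdeal k (glueList k₁ k₂ A B) = extIdealLeft k τ A + extIdealRight k σ B +
      Ideal.span {X (Sum.inl j₀) - X (Sum.inr l₀)}) :
    IsGluing k A B k₁ k₂ := by
  classical
  refine ⟨Pi.single j₀ 1, Pi.single l₀ 1, ?_, ?_⟩ <;>
    simp only [prod_pow_piSingle, pow_one]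
  · exact X_sub_X_notMem_extIdealLeft_add_extIdealRight A B j₀ l₀ hB
  · exact h

end Gluing

section CaseLists

variable {p q : ℕ} {a : Fin p → ℕ} {b : Fin q → ℕ} {c d m r : ℕ}

lemma linearCombination_caseListA_apply_two (u : Unit ⊕ Fin p ⊕ Unit → ℕ) :
    Fintype.linearCombination ℕ (caseListA p a c r) u 2 = 0 := by
  simp only [Fintype.linearCombination_apply, Finset.sum_apply, Pi.smul_apply, smul_eq_mul]
  exact Finset.sum_eq_zero fun j _ => by rcases j with _ | _ | _ <;> rfl

lemma linearCombination_caseListB_apply_zero (v : Unit ⊕ Fin q ⊕ Unit → ℕ) :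
    Fintype.linearCombination ℕ (caseListB q b d m) v 0 = (∑ j, v j) * ((m - 1) * d) := by
  simp only [Fintype.linearCombination_apply, Finset.sum_apply, Pi.smul_apply, smul_eq_mul,
    Finset.sum_mul]
  exact Finset.sum_congr rfl fun j _ => by rcases j with _ | _ | _ <;> rfl

lemma linearCombination_caseListB_apply_one_add_two (hbd : ∀ j, b j ≤ d)
    (v : Unit ⊕ Fin q ⊕ Unit → ℕ) :
    Fintype.linearCombination ℕ (caseListB q b d m) v 1 +
      Fintype.linearCombination ℕ (caseListB q b d m) v 2 = (∑ j, v j) * d := by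
  simp only [Fintype.linearCombination_apply, Finset.sum_apply, Pi.smul_apply, smul_eq_mul,
    ← Finset.sum_add_distrib, ← mul_add, Finset.sum_mul]
  refine Finset.sum_congr rfl fun j _ => congrArg _ ?_
  rcases j with _ | j | _
  · rfl
  · exact Nat.sub_add_cancel (hbd j)
  · exact zero_add d

lemma linearCombination_caseListB_eq_add (hbd : ∀ j, b j ≤ d) {v v' : Unit ⊕ Fin q ⊕ Unit → ℕ}
    (h2 : Fintype.linearCombination ℕ (caseListB q b d m) v 2 =
      Fintype.linearCombination ℕ (caseListB q b d m) v' 2)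
    (hle : ∑ j, v j ≤ ∑ j, v' j) :
    Fintype.linearCombination ℕ (caseListB q b d m) v' =
      Fintype.linearCombination ℕ (caseListB q b d m) v +
        (∑ j, v' j - ∑ j, v j) • caseListB q b d m (Sum.inl ()) := by
  have e0 : Fintype.linearCombination ℕ (caseListB q b d m) v' 0 =
      Fintype.linearCombination ℕ (caseListB q b d m) v 0 +
        (∑ j, v' j - ∑ j, v j) * ((m - 1) * d) := by
    rw [linearCombination_caseListB_apply_zero, linearCombination_caseListB_apply_zero,
      ← add_mul, Nat.add_sub_cancel' hle]
  have e1 : Fintype.linearCombination ℕ (caseListB q b d m) v' 1 =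
      Fintype.linearCombination ℕ (caseListB q b d m) v 1 + (∑ j, v' j - ∑ j, v j) * d := by
    have := linearCombination_caseListB_apply_one_add_two (m := m) hbd v
    have := linearCombination_caseListB_apply_one_add_two (m := m) hbd v'
    have := Nat.mul_le_mul_right d hle
    rw [Nat.sub_mul]
    omega
  funext t
  fin_cases t
  exacts [e0, e1, h2.symm]

lemma caseListB_inl_ne_zero (hd : 0 < d) : caseListB q b d m (Sum.inl ()) ≠ 0 :=
  fun h => hd.ne' (congrFun h 1)

lemma caseList_glue {i : Fin p} (hkey : c - a i + r = (m - 1) * a i) :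
    d • caseListA p a c r (Sum.inr (Sum.inl i)) = a i • caseListB q b d m (Sum.inl ()) := by
  funext t
  fin_cases t <;> simp [caseListA, caseListB, hkey] <;> ring

lemma caseList_hasGluingShifts {i : Fin p} (hbd : ∀ j, b j ≤ d) (hd : 0 < d) (hai : 0 < a i)
    (hkey : c - a i + r = (m - 1) * a i) :
    HasGluingShifts d (a i) (caseListA p a c r) (caseListB q b d m) (Sum.inr (Sum.inl i))
      (Sum.inl ()) := by
  intro u u' v v' hdeg
  have h2 : Fintype.linearCombination ℕ (caseListB q b d m) v 2 =
      Fintype.linearCombination ℕ (caseListB q b d m) v' 2 := by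
    have h := congrFun hdeg 2
    simp only [Pi.add_apply, Pi.smul_apply, smul_eq_mul, linearCombination_caseListA_apply_two,
      mul_zero, zero_add] at h
    exact Nat.eq_of_mul_eq_mul_left hai h
  rcases le_total (∑ j, v j) (∑ j, v' j) with hle | hle
  · have hB := linearCombination_caseListB_eq_add hbd h2 hle
    exact ⟨_, Or.inl ⟨eq_add_nsmul_of_smul_add_smul_eq hd.ne' hdeg hB (caseList_glue hkey), hB⟩⟩
  · have hB := linearCombination_caseListB_eq_add hbd h2.symm hle
    exact ⟨_, Or.inr ⟨eq_add_nsmul_of_smul_add_smul_eq hd.ne' hdeg.symm hB (caseList_glue hkey),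
      hB⟩⟩

end CaseLists

theorem homogeneous_dim2_gluing_general (k : Type*) [Field k] {p q : ℕ} (hq : 0 < q)
    (c d m r : ℕ) (a : Fin p → ℕ) (b : Fin q → ℕ)
    (ha0 : ∀ j, 0 < a j) (hac : ∀ j, a j < c)
    (hbd : ∀ j, b j < d)
    (i : Fin p) (hc : c + r = m * a i) :
    IsGluing k (caseListA p a c r) (caseListB q b d m) d (a i) ∧
    toricIdeal k (glueList d (a i) (caseListA p a c r) (caseListB q b d m)) =
      extIdealLeft k (Unit ⊕ Fin q ⊕ Unit) (caseListA p a c r) +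
      extIdealRight k (Unit ⊕ Fin p ⊕ Unit) (caseListB q b d m) +
      Ideal.span {(X (Sum.inl (Sum.inr (Sum.inl i))) - X (Sum.inr (Sum.inl ())) :
        MvPolynomial ((Unit ⊕ Fin p ⊕ Unit) ⊕ (Unit ⊕ Fin q ⊕ Unit)) k)} := by
  have hd : 0 < d := (Nat.zero_le _).trans_lt (hbd ⟨0, hq⟩)
  have hkey : c - a i + r = (m - 1) * a i := by
    have := hac i
    rw [Nat.sub_one_mul]
    omega
  have hI := toricIdeal_glueList_eq (k := k) (caseList_glue hkey)
    (caseList_hasGluingShifts (fun j => (hbd j).le) hd (ha0 i) hkey)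
  exact ⟨isGluing_of_toricIdeal_glueList_eq (caseListB_inl_ne_zero hd) hI, hI⟩

/-- Gluing two nondegenerate homogeneous semigroups of `ℕ²`, embedded as
degenerate semigroups in `ℕ³`: `C = dA' ⋈ a_iB'`, and more precisely
`I_C = I_{A'}·R + I_{B'}·R + ⟨x_{i+1} − y_1⟩`. -/
theorem homogeneous_dim2_gluing (k : Type*) [Field k] {p q : ℕ} (hp : 0 < p) (hq : 0 < q)
    (c d m r : ℕ) (a : Fin p → ℕ) (b : Fin q → ℕ)
    (ha0 : ∀ j, 0 < a j) (haMono : StrictMono a) (hac : ∀ j, a j < c)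
    (hb0 : ∀ j, 0 < b j) (hbMono : StrictMono b) (hbd : ∀ j, b j < d)
    (i : Fin p) (hcop : Nat.Coprime d (a i))
    (hm : 2 ≤ m) (hr : r < a i) (hc : c + r = m * a i) :
    IsGluing k (caseListA p a c r) (caseListB q b d m) d (a i) ∧
    toricIdeal k (glueList d (a i) (caseListA p a c r) (caseListB q b d m)) =
      extIdealLeft k (Unit ⊕ Fin q ⊕ Unit) (caseListA p a c r) +
      extIdealRight k (Unit ⊕ Fin p ⊕ Unit) (caseListB q b d m) +
      Ideal.span {(X (Sum.inl (Sum.inr (Sum.inl i))) - X (Sum.inr (Sum.inl ())) :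
        MvPolynomial ((Unit ⊕ Fin p ⊕ Unit) ⊕ (Unit ⊕ Fin q ⊕ Unit)) k)} :=
  homogeneous_dim2_gluing_general k hq c d m r a b ha0 hac hbd i hc
end
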